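/- arXiv:1907.11874 — 2 statements merged into one kernel-verified Lean document; each statement's English description precedes it below -/
import Mathlib

section
/- For a simple graph G with m edges, the energy E(G) = sum of absolute values of adjacency eigenvalues satisfies E(G) ≥ 2√m. -/
open SimpleGraph Finset

/-- Adjacency matrix over `ℝ` (classical decidability). -/
noncomputable def adjMatR {n : ℕ} (G : SimpleGraph (Fin n)) : Matrix (Fin n) (Fin n) ℝ :=
  @SimpleGraph.adjMatrix ℝ (Fin n) G (Classical.decRel _) _ _

lemma adjMatR_isHermitian {n : ℕ} (G : SimpleGraph (Fin n)) : (adjMatR G).IsHermitian := by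
  have h : (adjMatR G).IsSymm := @SimpleGraph.isSymm_adjMatrix ℝ (Fin n) G (Classical.decRel _) _ _
  unfold Matrix.IsHermitian
  rw [Matrix.conjTranspose_eq_transpose_of_trivial]
  exact h

/-- Multiset of adjacency eigenvalues (with multiplicity). -/
noncomputable def specMS {n : ℕ} (G : SimpleGraph (Fin n)) : Multiset ℝ :=
  Finset.univ.val.map (adjMatR_isHermitian G).eigenvalues

/-- `i`-th largest adjacency eigenvalue (0-indexed). -/
noncomputable def eigval {n : ℕ} (G : SimpleGraph (Fin n)) (i : ℕ) : ℝ :=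
  ((specMS G).sort (· ≥ ·)).getD i 0

/-- Graph energy. -/
noncomputable def energy {n : ℕ} (G : SimpleGraph (Fin n)) : ℝ :=
  ((specMS G).map (fun x => |x|)).sum

/-- ℓ¹ spectral distance. -/
noncomputable def specDist {n : ℕ} (G H : SimpleGraph (Fin n)) : ℝ :=
  ∑ i ∈ Finset.range n, |eigval G i - eigval H i|

/-- number of edges -/
noncomputable def numEdges {n : ℕ} (G : SimpleGraph (Fin n)) : ℕ := G.edgeSet.ncard

/-- `K_2 + (n-2)K_1`: one edge plus isolated vertices. -/
def oneEdgeG (n : ℕ) : SimpleGraph (Fin n) :=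
  SimpleGraph.fromRel (fun u v => (u : ℕ) = 0 ∧ (v : ℕ) = 1)

/-- `P_3 + (n-3)K_1`: a path on 3 vertices plus isolated vertices. -/
def path3G (n : ℕ) : SimpleGraph (Fin n) :=
  SimpleGraph.fromRel (fun u v => ((u : ℕ) = 0 ∧ (v : ℕ) = 1) ∨ ((u : ℕ) = 1 ∧ (v : ℕ) = 2))

/-- Complete bipartite graph `K_{a,b}` on `Fin (a+b)`. -/
def compBip (a b : ℕ) : SimpleGraph (Fin (a + b)) :=
  SimpleGraph.fromRel (fun u v => (u : ℕ) < a ∧ a ≤ (v : ℕ))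

/-- `K_{r,s} + tK_1`: complete bipartite plus `t` isolated vertices. -/
def compBipPlus (r s t : ℕ) : SimpleGraph (Fin (r + s + t)) :=
  SimpleGraph.fromRel (fun u v => (u : ℕ) < r ∧ r ≤ (v : ℕ) ∧ (v : ℕ) < r + s)

/-- `K_1 + K_{n-1}`: an isolated vertex plus a complete graph. -/
def k1PlusComplete (n : ℕ) : SimpleGraph (Fin n) :=
  SimpleGraph.fromRel (fun u v => (u : ℕ) ≠ 0 ∧ (v : ℕ) ≠ 0)

/-- `(K_1 + K_2) ∇ (n-3)K_1`: join of `K_1 + K_2` with `n-3` isolated vertices. -/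
def k1k2JoinEmpty (n : ℕ) : SimpleGraph (Fin n) :=
  SimpleGraph.fromRel (fun u v =>
    ((u : ℕ) = 1 ∧ (v : ℕ) = 2) ∨ ((u : ℕ) < 3 ∧ 3 ≤ (v : ℕ)))

/-!
The adjacency eigenvalues `λᵢ` satisfy `∑ λᵢ = tr A = 0` and `∑ λᵢ² = tr A² = 2m`. For reals
summing to zero each `|λᵢ|` is at most half of `E = ∑ |λⱼ|`, so `2 ∑ λᵢ² ≤ E ∑ |λᵢ| = E²`,
that is `E² ≥ 4m`.
-/

theorem Finset.two_mul_abs_le_sum_abs_of_sum_eq_zero {ι R : Type*} [CommRing R] [LinearOrder R]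
    [IsStrictOrderedRing R] [DecidableEq ι] {s : Finset ι} {x : ι → R} (hx : ∑ i ∈ s, x i = 0)
    {i : ι} (hi : i ∈ s) : 2 * |x i| ≤ ∑ j ∈ s, |x j| := by
  rw [← add_sum_erase s _ hi] at hx ⊢
  have habs : |x i| ≤ ∑ j ∈ s.erase i, |x j| := by
    rw [eq_neg_of_add_eq_zero_left hx, abs_neg]
    exact abs_sum_le_sum_abs _ _
  linarith

theorem Finset.two_mul_sum_sq_le_sq_sum_abs_of_sum_eq_zero {ι R : Type*} [CommRing R]
    [LinearOrder R] [IsStrictOrderedRing R] {s : Finset ι} {x : ι → R} (hx : ∑ i ∈ s, x i = 0) :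
    2 * ∑ i ∈ s, x i ^ 2 ≤ (∑ i ∈ s, |x i|) ^ 2 := by
  classical
  calc 2 * ∑ i ∈ s, x i ^ 2 = ∑ i ∈ s, |x i| * (2 * |x i|) := by
        rw [mul_sum]; congr! 1 with i; rw [← sq_abs]; ring
    _ ≤ ∑ i ∈ s, |x i| * ∑ j ∈ s, |x j| := by
        gcongr with i hi
        exact two_mul_abs_le_sum_abs_of_sum_eq_zero hx hi
    _ = (∑ i ∈ s, |x i|) ^ 2 := by rw [← sum_mul, sq]

theorem Matrix.IsHermitian.trace_pow_eq_sum_eigenvalues_pow {n 𝕜 : Type*} [Fintype n]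
    [DecidableEq n] [RCLike 𝕜] {A : Matrix n n 𝕜} (hA : A.IsHermitian) (k : ℕ) :
    (A ^ k).trace = ∑ i, (hA.eigenvalues i : 𝕜) ^ k := by
  conv_lhs => rw [hA.spectral_theorem, ← map_pow, Unitary.conjStarAlgAut_apply, trace_mul_cycle,
    Unitary.coe_star_mul_self, one_mul, diagonal_pow]
  simp [trace_diagonal]

theorem SimpleGraph.trace_adjMatrix_mul_self {V α : Type*} [Fintype V]
    (G : SimpleGraph V) [DecidableRel G.Adj] [NonAssocSemiring α] :
    (G.adjMatrix α * G.adjMatrix α).trace = 2 * #G.edgeFinset := by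
  simp only [Matrix.trace, Matrix.diag, adjMatrix_mul_self_apply_self, ← Nat.cast_sum,
    sum_degrees_eq_twice_card_edges, Nat.cast_mul, Nat.cast_ofNat]

lemma numEdges_eq_card_edgeFinset {n : ℕ} (G : SimpleGraph (Fin n)) [DecidableRel G.Adj] :
    numEdges G = #G.edgeFinset := by
  rw [numEdges, ← coe_edgeFinset, Set.ncard_coe_finset]

lemma energy_eq_sum_abs_eigenvalues {n : ℕ} (G : SimpleGraph (Fin n)) :
    energy G = ∑ i, |(adjMatR_isHermitian G).eigenvalues i| := by
  rw [energy, specMS, Multiset.map_map]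
  rfl

lemma adjMatR_eq_adjMatrix {n : ℕ} (G : SimpleGraph (Fin n)) [DecidableRel G.Adj] :
    adjMatR G = G.adjMatrix ℝ := by
  unfold adjMatR
  congr

lemma sum_eigenvalues_adjMatR {n : ℕ} (G : SimpleGraph (Fin n)) :
    ∑ i, (adjMatR_isHermitian G).eigenvalues i = 0 := by
  classical
  calc ∑ i, (adjMatR_isHermitian G).eigenvalues i = (adjMatR G).trace := by
        simpa using (adjMatR_isHermitian G).trace_eq_sum_eigenvalues.symm
    _ = 0 := by rw [adjMatR_eq_adjMatrix, trace_adjMatrix]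

lemma sum_sq_eigenvalues_adjMatR {n : ℕ} (G : SimpleGraph (Fin n)) :
    ∑ i, (adjMatR_isHermitian G).eigenvalues i ^ 2 = 2 * numEdges G := by
  classical
  calc ∑ i, (adjMatR_isHermitian G).eigenvalues i ^ 2 = (adjMatR G ^ 2).trace := by
        simpa using ((adjMatR_isHermitian G).trace_pow_eq_sum_eigenvalues_pow 2).symm
    _ = 2 * numEdges G := by
        rw [adjMatR_eq_adjMatrix, sq, trace_adjMatrix_mul_self, numEdges_eq_card_edgeFinset]

theorem energy_ge_two_sqrt_numEdges (n : ℕ) (G : SimpleGraph (Fin n)) :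
    energy G ≥ 2 * Real.sqrt (numEdges G) := by
  have hsq : 2 * (2 * (numEdges G : ℝ)) ≤ energy G ^ 2 := by
    rw [← sum_sq_eigenvalues_adjMatR, energy_eq_sum_abs_eigenvalues]
    exact Finset.two_mul_sum_sq_le_sq_sum_abs_of_sum_eq_zero (sum_eigenvalues_adjMatR G)
  have hE : 0 ≤ energy G := by
    rw [energy_eq_sum_abs_eigenvalues]
    positivity
  refine le_of_pow_le_pow_left₀ two_ne_zero hE ?_
  rw [mul_pow, Real.sq_sqrt (Nat.cast_nonneg _)]
  linarith
end

section
/- σ(K_n, K_n \ e) = 2 for every n ≥ 2. -/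
open SimpleGraph Finset

/-! The adjacency matrix of `K_n` is `J - 1`, and that of `K_n \ uv` is `U V - 1` with `U` the
`n × 3` matrix of columns `e_u, e_v, 𝟙` and `V` the `3 × n` matrix of rows `-e_v, -e_u, 𝟙`.
Sylvester's identity `X³ χ(U V) = Xⁿ χ(V U)` reduces the characteristic polynomial of
`K_n \ uv` to that of a `3 × 3` matrix. In nonincreasing order the two spectra agree except in
the first, second and last places, where the gaps are `n - 1 - μ₊`, `1` and `-1 - μ₋`, with
`μ₊ ≥ μ₋` the roots of `X² - (n - 3) X - (2n - 4)`; they add up to `2` because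
`μ₊ + μ₋ = n - 3`. -/

open Polynomial Matrix

lemma sum_range_getD_eq_sum_zipWith {α β γ : Type*} [AddCommMonoid γ] (f : α → β → γ)
    (a : α) (b : β) : ∀ {L : List α} {M : List β}, L.length = M.length →
      ∑ i ∈ range L.length, f (L.getD i a) (M.getD i b) = (List.zipWith f L M).sum
  | [], [], _ => by simp
  | x :: L, y :: M, h => by
    rw [List.length_cons, Finset.sum_range_succ', List.zipWith_cons_cons, List.sum_cons, add_comm,
      ← sum_range_getD_eq_sum_zipWith f a b (L := L) (M := M) (by simpa using h)]
    simp

lemma pairwise_ge_cons_cons_replicate_append {α : Type*} [Preorder α] {a b c d : α} (k : ℕ)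
    (hab : b ≤ a) (hbc : c ≤ b) (hdc : d ≤ c) :
    (a :: b :: (List.replicate k c ++ [d])).Pairwise (· ≥ ·) := by
  have hle : ∀ x ∈ List.replicate k c ++ [d], x ≤ c := by
    simp only [List.mem_append, List.mem_replicate, List.mem_singleton]
    rintro x (⟨-, rfl⟩ | rfl)
    exacts [le_rfl, hdc]
  refine .cons ?_ (.cons (fun x hx => (hle x hx).trans hbc) ?_)
  · simp only [List.mem_cons]
    rintro x (rfl | hx)
    exacts [hab, ((hle x hx).trans hbc).trans hab]
  · exact List.pairwise_append.2 ⟨List.pairwise_replicate.2 (Or.inr le_rfl),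
      List.pairwise_singleton _ _, fun x hx y hy => by simp_all⟩

lemma X_sq_sub_C_mul_X_sub_C_eq_mul {b c : ℝ} (h : 0 ≤ b ^ 2 + 4 * c) :
    X ^ 2 - C b * X - C c =
      (X - C ((b + √(b ^ 2 + 4 * c)) / 2)) * (X - C ((b - √(b ^ 2 + 4 * c)) / 2)) := by
  have hsq := Real.sq_sqrt h
  have hb : C b = C ((b + √(b ^ 2 + 4 * c)) / 2) + C ((b - √(b ^ 2 + 4 * c)) / 2) := by
    rw [← C_add]; ring_nf
  have hc : C c = -(C ((b + √(b ^ 2 + 4 * c)) / 2) * C ((b - √(b ^ 2 + 4 * c)) / 2)) := by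
    rw [← C_mul, ← C_neg]; congr 1; linear_combination -hsq / 4
  rw [hb, hc]; ring

section SortedSpectrum

variable {n : ℕ}

lemma specMS_eq_roots_charpoly (G : SimpleGraph (Fin n)) :
    specMS G = (adjMatR G).charpoly.roots := by
  simp [specMS, (adjMatR_isHermitian G).roots_charpoly_eq_eigenvalues]

lemma card_specMS (G : SimpleGraph (Fin n)) : Multiset.card (specMS G) = n := by
  simp [specMS]

lemma eigval_eq_getD {G : SimpleGraph (Fin n)} {L : List ℝ} (hG : specMS G = L)
    (hL : L.Pairwise (· ≥ ·)) (i : ℕ) : eigval G i = L.getD i 0 := by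
  rw [eigval, hG, Multiset.coe_sort, List.mergeSort_of_pairwise (by simpa using hL)]

lemma specDist_eq_sum_zipWith {G H : SimpleGraph (Fin n)} {L M : List ℝ}
    (hG : specMS G = L) (hH : specMS H = M) (hL : L.Pairwise (· ≥ ·))
    (hM : M.Pairwise (· ≥ ·)) :
    specDist G H = (List.zipWith (fun a b => |a - b|) L M).sum := by
  have hLn : L.length = n := by simpa [hG] using card_specMS G
  have hMn : M.length = n := by simpa [hH] using card_specMS H
  simp_rw [specDist, eigval_eq_getD hG hL, eigval_eq_getD hH hM, ← hLn]
  exact sum_range_getD_eq_sum_zipWith (fun a b : ℝ => |a - b|) 0 0 (hLn.trans hMn.symm)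

end SortedSpectrum

section Complete

variable {n : ℕ}

lemma adjMatR_top : adjMatR (⊤ : SimpleGraph (Fin n)) = vecMulVec 1 1 - scalar (Fin n) 1 := by
  ext i j
  by_cases h : i = j <;> simp [adjMatR, h]

lemma charpoly_adjMatR_top (hn : 1 ≤ n) :
    (adjMatR (⊤ : SimpleGraph (Fin n))).charpoly =
      (X - C ((n : ℝ) - 1)) * (X - C (-1)) ^ (n - 1) := by
  obtain ⟨k, rfl⟩ : ∃ k, n = k + 1 := ⟨n - 1, by omega⟩
  rw [adjMatR_top, charpoly_sub_scalar, charpoly_vecMulVec]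
  simp only [Fintype.card_fin, one_dotProduct_one, Nat.cast_add, Nat.cast_one,
    add_tsub_cancel_right, smul_eq_C_mul, map_add, map_natCast, map_one, sub_comp, pow_comp,
    X_comp, mul_comp, add_comp, natCast_comp, one_comp, map_neg, sub_neg_eq_add]
  ring

lemma specMS_top (hn : 1 ≤ n) :
    specMS (⊤ : SimpleGraph (Fin n)) =
      (((n : ℝ) - 1) :: List.replicate (n - 1) (-1) : List ℝ) := by
  rw [specMS_eq_roots_charpoly, charpoly_adjMatR_top hn,
    roots_mul ((monic_X_sub_C _).mul ((monic_X_sub_C _).pow _)).ne_zero, roots_X_sub_C,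
    roots_pow, roots_X_sub_C, Multiset.nsmul_singleton, ← Multiset.coe_replicate]
  rfl

end Complete

section DeletedEdge

variable {n : ℕ} {u v : Fin n}

lemma adjMatR_top_deleteEdges (huv : u ≠ v) :
    adjMatR ((⊤ : SimpleGraph (Fin n)).deleteEdges {s(u, v)}) =
      (of ![Pi.single u 1, Pi.single v 1, 1] : Matrix (Fin 3) (Fin n) ℝ)ᵀ *
        (of ![-Pi.single v 1, -Pi.single u 1, 1] : Matrix (Fin 3) (Fin n) ℝ) -
          scalar (Fin n) 1 := by
  ext i j
  simp only [adjMatR, adjMatrix_apply, deleteEdges_adj, top_adj, Set.mem_singleton_iff,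
    Sym2.eq_iff, Matrix.sub_apply, mul_apply, Fin.sum_univ_three, transpose_apply, of_apply,
    scalar_apply, diagonal_apply, ne_eq, not_or, not_and, Fin.isValue, cons_val',
    Pi.single_apply, Pi.one_apply, cons_val_fin_one, cons_val_zero, Pi.neg_apply, mul_neg,
    mul_ite, mul_one, mul_zero, cons_val_one, Matrix.cons_val]
  split_ifs <;> simp_all

lemma edgeVectors_mul_transpose (huv : u ≠ v) :
    (of ![-Pi.single v 1, -Pi.single u 1, 1] : Matrix (Fin 3) (Fin n) ℝ) *
        (of ![Pi.single u 1, Pi.single v 1, 1] : Matrix (Fin 3) (Fin n) ℝ)ᵀ =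
      !![0, -1, -1; -1, 0, -1; 1, 1, (n : ℝ)] := by
  ext k l
  fin_cases k <;> fin_cases l <;> simp [mul_apply, Pi.single_apply, huv, huv.symm]

lemma charpoly_edgeVectors_gram :
    (!![0, -1, -1; -1, 0, -1; 1, 1, (n : ℝ)]).charpoly =
      X ^ 3 - C (n : ℝ) * X ^ 2 + X + C (n : ℝ) - 2 := by
  rw [charpoly, det_fin_three]
  simp only [Fin.isValue, charmatrix_apply_eq, of_apply, cons_val', cons_val_zero,
    cons_val_fin_one, map_zero, sub_zero, cons_val_one, Matrix.cons_val, map_natCast, ne_eq,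
    Fin.reduceEq, not_false_eq_true, charmatrix_apply_ne, map_neg, map_one, neg_neg, mul_one,
    mul_neg, sub_neg_eq_add, zero_ne_one, one_ne_zero, one_mul]
  ring

lemma X_add_C_pow_three_mul_charpoly_adjMatR_top_deleteEdges (huv : u ≠ v) :
    (X + C 1) ^ 3 * (adjMatR ((⊤ : SimpleGraph (Fin n)).deleteEdges {s(u, v)})).charpoly =
      (X + C 1) ^ n * (X * (X ^ 2 - C ((n : ℝ) - 3) * X - C (2 * (n : ℝ) - 4))) := by
  have h := congrArg (·.comp (X + C 1)) (charpoly_mul_comm'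
    (of ![Pi.single u 1, Pi.single v 1, 1] : Matrix (Fin 3) (Fin n) ℝ)ᵀ
    (of ![-Pi.single v 1, -Pi.single u 1, 1] : Matrix (Fin 3) (Fin n) ℝ))
  simp only [mul_comp, pow_comp, X_comp, edgeVectors_mul_transpose huv,
    charpoly_edgeVectors_gram, Fintype.card_fin, ← charpoly_sub_scalar] at h
  rw [adjMatR_top_deleteEdges huv, h]
  simp only [sub_comp, add_comp, mul_comp, pow_comp, X_comp, natCast_comp, ofNat_comp, map_sub,
    map_mul, map_natCast, map_ofNat, map_one]
  ring

-- The three extra eigenvalues `-1` on the left make this hold for `n = 2` as well.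
lemma specMS_top_deleteEdges_add_replicate (huv : u ≠ v) :
    specMS ((⊤ : SimpleGraph (Fin n)).deleteEdges {s(u, v)}) + Multiset.replicate 3 (-1) =
      {0, ((n : ℝ) - 3 + √((n : ℝ) ^ 2 + 2 * n - 7)) / 2,
        ((n : ℝ) - 3 - √((n : ℝ) ^ 2 + 2 * n - 7)) / 2} + Multiset.replicate n (-1) := by
  have hn : (2 : ℝ) ≤ n := by
    have := Fin.val_ne_of_ne huv; have := u.2; have := v.2
    exact_mod_cast (show 2 ≤ n by omega)
  have hquad := X_sq_sub_C_mul_X_sub_C_eq_mul (b := (n : ℝ) - 3) (c := 2 * n - 4) (by nlinarith)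
  rw [show ((n : ℝ) - 3) ^ 2 + 4 * (2 * n - 4) = (n : ℝ) ^ 2 + 2 * n - 7 by ring] at hquad
  have hmonic : (X * ((X - C ((n - 3 + √((n : ℝ) ^ 2 + 2 * n - 7)) / 2)) *
      (X - C ((n - 3 - √((n : ℝ) ^ 2 + 2 * n - 7)) / 2)))).Monic :=
    monic_X.mul ((monic_X_sub_C _).mul (monic_X_sub_C _))
  have h := congrArg roots (X_add_C_pow_three_mul_charpoly_adjMatR_top_deleteEdges huv)
  rw [hquad, roots_mul (((monic_X_add_C 1).pow 3).mul (charpoly_monic _)).ne_zero,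
    roots_mul (((monic_X_add_C 1).pow n).mul hmonic).ne_zero, roots_mul hmonic.ne_zero,
    roots_mul ((monic_X_sub_C _).mul (monic_X_sub_C _)).ne_zero,
    show (X + C 1 : ℝ[X]) = X - C (-1) by simp, roots_pow, roots_pow, roots_X_sub_C, roots_X,
    roots_X_sub_C, roots_X_sub_C, Multiset.nsmul_singleton, Multiset.nsmul_singleton] at h
  rw [specMS_eq_roots_charpoly, add_comm, h]
  simp only [Multiset.insert_eq_cons, ← Multiset.singleton_add]
  abel

lemma specMS_top_deleteEdges (hn : 3 ≤ n) (huv : u ≠ v) :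
    specMS ((⊤ : SimpleGraph (Fin n)).deleteEdges {s(u, v)}) =
      (((n : ℝ) - 3 + √((n : ℝ) ^ 2 + 2 * n - 7)) / 2 :: 0 :: (List.replicate (n - 3) (-1) ++
        [((n : ℝ) - 3 - √((n : ℝ) ^ 2 + 2 * n - 7)) / 2]) : List ℝ) := by
  have h := specMS_top_deleteEdges_add_replicate huv
  rw [show Multiset.replicate n (-1 : ℝ) =
      Multiset.replicate (n - 3) (-1) + Multiset.replicate 3 (-1) by
    rw [← Multiset.replicate_add, Nat.sub_add_cancel hn], ← add_assoc] at h
  rw [add_right_cancel h, ← Multiset.coe_replicate]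
  simp only [Multiset.insert_eq_cons, ← Multiset.singleton_add, ← Multiset.coe_add,
    ← Multiset.cons_coe]
  abel

lemma specDist_top_deleteEdges_of_three_le (hn : 3 ≤ n) (huv : u ≠ v) :
    specDist (⊤ : SimpleGraph (Fin n))
      ((⊤ : SimpleGraph (Fin n)).deleteEdges {s(u, v)}) = 2 := by
  have hnR : (3 : ℝ) ≤ n := by exact_mod_cast hn
  have hs_lo : (n : ℝ) - 1 ≤ √((n : ℝ) ^ 2 + 2 * n - 7) :=
    Real.le_sqrt_of_sq_le (by nlinarith)
  have hs_hi : √((n : ℝ) ^ 2 + 2 * n - 7) ≤ n + 1 :=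
    Real.sqrt_le_iff.2 ⟨by linarith, by nlinarith⟩
  have hrep : List.replicate (n - 1) (-1 : ℝ) = -1 :: (List.replicate (n - 3) (-1) ++ [-1]) := by
    rw [← List.replicate_succ', ← List.replicate_succ]; congr 1; omega
  rw [specDist_eq_sum_zipWith (specMS_top (by omega)) (specMS_top_deleteEdges hn huv)
    (by simp [List.pairwise_replicate])
    (pairwise_ge_cons_cons_replicate_append _ (by linarith) (by norm_num) (by linarith)),
    hrep, List.zipWith_cons_cons, List.zipWith_cons_cons, List.zipWith_append (by simp),
    List.zipWith_replicate]
  simp only [sub_zero, abs_neg, abs_one, min_self, sub_self, abs_zero, List.zipWith_cons_cons,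
    List.zipWith_self, List.map_nil, List.sum_cons, List.sum_append, List.sum_replicate,
    nsmul_zero, List.sum_nil, add_zero, zero_add]
  rw [abs_of_nonneg (by linarith), abs_of_nonneg (by linarith)]
  ring

end DeletedEdge

lemma specMS_top_deleteEdges_two {u v : Fin 2} (huv : u ≠ v) :
    specMS ((⊤ : SimpleGraph (Fin 2)).deleteEdges {s(u, v)}) = ([0, 0] : List ℝ) := by
  refine add_right_cancel (b := Multiset.replicate 3 (-1))
    ((specMS_top_deleteEdges_add_replicate huv).trans ?_)
  norm_num [Multiset.replicate_succ, ← Multiset.cons_coe, Multiset.cons_swap]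

lemma specDist_top_deleteEdges_two {u v : Fin 2} (huv : u ≠ v) :
    specDist (⊤ : SimpleGraph (Fin 2))
      ((⊤ : SimpleGraph (Fin 2)).deleteEdges {s(u, v)}) = 2 := by
  rw [specDist_eq_sum_zipWith (specMS_top (by norm_num)) (specMS_top_deleteEdges_two huv)
    (by norm_num) (by norm_num)]
  norm_num

theorem specDist_complete_minus_edge (n : ℕ) (hn : 2 ≤ n) (e : Sym2 (Fin n))
    (he : e ∈ (⊤ : SimpleGraph (Fin n)).edgeSet) :
    specDist (⊤ : SimpleGraph (Fin n)) ((⊤ : SimpleGraph (Fin n)).deleteEdges {e}) = 2 := by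
  induction e using Sym2.ind with
  | _ u v =>
  have huv : u ≠ v := by simpa using he
  rcases hn.eq_or_lt with rfl | hn3
  · exact specDist_top_deleteEdges_two huv
  · exact specDist_top_deleteEdges_of_three_le hn3 huv
end
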